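/- The quaternionic Zak transform of a modulated and translated window satisfies Z_q^α(M_{k/α} T_{αn} g)(x, ω) = exp(−2πj α n₂ω₂) exp(2πj k₂x₂/α) · Z_q^α g(x, ω) · exp(2πi k₁x₁/α) exp(−2πi α n₁ω₁) for all k, n ∈ ℤ² and x, ω ∈ ℝ². -/

import Mathlib

open MeasureTheory Real
noncomputable section
abbrev ℍ : Type := Quaternion ℝ
/-- `exp(i t) = cos t + i sin t` as a quaternion. -/
def eqi (t : ℝ) : ℍ := ⟨Real.cos t, Real.sin t, 0, 0⟩
/-- `exp(j t) = cos t + j sin t` as a quaternion. -/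
def eqj (t : ℝ) : ℍ := ⟨Real.cos t, 0, Real.sin t, 0⟩
/-- Translation operator. -/
def Tr (b : ℝ × ℝ) (g : ℝ × ℝ → ℍ) : ℝ × ℝ → ℍ := fun x => g (x.1 - b.1, x.2 - b.2)
/-- Two-sided modulation operator. -/
def Mo (ω : ℝ × ℝ) (g : ℝ × ℝ → ℍ) : ℝ × ℝ → ℍ :=
  fun x => eqj (2 * π * ω.2 * x.2) * g x * eqi (2 * π * ω.1 * x.1)
/-- The quaternionic Zak transform. -/
def Zak (α : ℝ) (f : ℝ × ℝ → ℍ) (x ω : ℝ × ℝ) : ℍ :=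
  ∑' m : ℤ × ℤ, eqj (2 * π * α * m.2 * ω.2) * f (x.1 - α * m.1, x.2 - α * m.2) *
    eqi (2 * π * α * m.1 * ω.1)
/-- The symmetric real scalar product on `L²(ℝ², ℍ)`. -/
def rip (f g : ℝ × ℝ → ℍ) : ℝ := (∫ x : ℝ × ℝ, f x * star (g x)).re
/-- The cube `Q_α = [0,α]²`. -/
def QA (α : ℝ) : Set (ℝ × ℝ) := Set.Icc 0 α ×ˢ Set.Icc 0 α
/-- `‖f‖₂²` on `ℝ²`. -/
def n2sq (f : ℝ × ℝ → ℍ) : ℝ := ∫ x : ℝ × ℝ, ‖f x‖ ^ 2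

/-!
In the `m`-th summand, modulation by `k/α` contributes `exp(2πj k₂x₂/α)` and `exp(2πi k₁x₁/α)`
times `exp(−2πj k₂m₂) = exp(−2πi k₁m₁) = 1`, and translation by `αn` shifts the index to `m + n`,
leaving `exp(−2πj α n₂ω₂)` and `exp(−2πi α n₁ω₁)` after reindexing the sum over `ℤ²`. No phase
has to pass the window: `j`-phases only meet `j`-phases on the left and `i`-phases only
`i`-phases on the right, and each of these two families is commutative.
-/

lemma eqi_add (s t : ℝ) : eqi (s + t) = eqi s * eqi t := by
  ext <;> simp only [Quaternion.re_mul, Quaternion.imI_mul, Quaternion.imJ_mul, Quaternion.imK_mul]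
    <;> simp [eqi, Real.cos_add, Real.sin_add]
  ring

lemma eqj_add (s t : ℝ) : eqj (s + t) = eqj s * eqj t := by
  ext <;> simp only [Quaternion.re_mul, Quaternion.imI_mul, Quaternion.imJ_mul, Quaternion.imK_mul]
    <;> simp [eqj, Real.cos_add, Real.sin_add]
  ring

lemma eqi_mul_comm (s t : ℝ) : eqi s * eqi t = eqi t * eqi s := by
  rw [← eqi_add, ← eqi_add, add_comm]

lemma eqj_mul_comm (s t : ℝ) : eqj s * eqj t = eqj t * eqj s := by
  rw [← eqj_add, ← eqj_add, add_comm]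

lemma eqj_mul_mul_eqi_swap (a b d e : ℝ) (q : ℍ) :
    eqj a * (eqj b * q * eqi d) * eqi e = eqj b * (eqj a * q * eqi e) * eqi d := by
  simp only [← mul_assoc]
  rw [eqj_mul_comm a b, mul_assoc _ (eqi d), eqi_mul_comm d e, ← mul_assoc]

lemma eqi_add_int_mul_two_pi (t : ℝ) (m : ℤ) : eqi (t + m * (2 * π)) = eqi t := by
  rw [eqi, eqi, Real.cos_add_int_mul_two_pi, Real.sin_add_int_mul_two_pi]

lemma eqj_add_int_mul_two_pi (t : ℝ) (m : ℤ) : eqj (t + m * (2 * π)) = eqj t := by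
  rw [eqj, eqj, Real.cos_add_int_mul_two_pi, Real.sin_add_int_mul_two_pi]

lemma two_pi_div_mul_sub_mul_int {α : ℝ} (hα : α ≠ 0) (k m : ℤ) (y : ℝ) :
    2 * π * (k / α) * (y - α * m) = 2 * π * k * y / α + ((-(k * m) : ℤ) : ℝ) * (2 * π) := by
  push_cast
  field_simp
  ring

lemma zak_of_mod {α : ℝ} (hα : α ≠ 0) (f : ℝ × ℝ → ℍ) (k : ℤ × ℤ) (x ω : ℝ × ℝ) :
    Zak α (Mo ((k.1 : ℝ) / α, (k.2 : ℝ) / α) f) x ω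
      = eqj (2 * π * k.2 * x.2 / α) * Zak α f x ω * eqi (2 * π * k.1 * x.1 / α) := by
  simp only [Zak, ← tsum_mul_left, ← tsum_mul_right]
  refine tsum_congr fun m => ?_
  simp only [Mo, two_pi_div_mul_sub_mul_int hα, eqi_add_int_mul_two_pi, eqj_add_int_mul_two_pi]
  exact eqj_mul_mul_eqi_swap _ _ _ _ _

lemma zak_of_trans (α : ℝ) (f : ℝ × ℝ → ℍ) (n : ℤ × ℤ) (x ω : ℝ × ℝ) :
    Zak α (Tr (α * n.1, α * n.2) f) x ω
      = eqj (-(2 * π * α * n.2 * ω.2)) * Zak α f x ω * eqi (-(2 * π * α * n.1 * ω.1)) := by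
  set S : ℤ × ℤ → ℍ := fun m =>
    eqj (2 * π * α * m.2 * ω.2) * f (x.1 - α * m.1, x.2 - α * m.2) * eqi (2 * π * α * m.1 * ω.1)
  have shift : ∀ m : ℤ × ℤ, eqj (2 * π * α * m.2 * ω.2) * Tr (α * n.1, α * n.2) f
        (x.1 - α * m.1, x.2 - α * m.2) * eqi (2 * π * α * m.1 * ω.1)
      = eqj (-(2 * π * α * n.2 * ω.2)) * S (m + n) * eqi (-(2 * π * α * n.1 * ω.1)) := by
    intro m
    have h₁ : 2 * π * α * m.1 * ω.1
        = 2 * π * α * ((m + n).1 : ℤ) * ω.1 + -(2 * π * α * n.1 * ω.1) := by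
      simp only [Prod.fst_add]; push_cast; ring
    have h₂ : 2 * π * α * m.2 * ω.2
        = -(2 * π * α * n.2 * ω.2) + 2 * π * α * ((m + n).2 : ℤ) * ω.2 := by
      simp only [Prod.snd_add]; push_cast; ring
    have h₃ : (x.1 - α * m.1 - α * n.1, x.2 - α * m.2 - α * n.2)
        = (x.1 - α * ((m + n).1 : ℤ), x.2 - α * ((m + n).2 : ℤ)) := by
      ext <;> simp only [Prod.fst_add, Prod.snd_add] <;> push_cast <;> ring
    simp only [Tr, S, h₃]
    rw [h₁, h₂, eqi_add, eqj_add]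
    simp only [mul_assoc]
  calc Zak α (Tr (α * n.1, α * n.2) f) x ω
      = ∑' m, eqj (-(2 * π * α * n.2 * ω.2)) * S (m + n) * eqi (-(2 * π * α * n.1 * ω.1)) :=
        tsum_congr shift
    _ = eqj (-(2 * π * α * n.2 * ω.2)) * (∑' m, S (m + n)) * eqi (-(2 * π * α * n.1 * ω.1)) := by
        rw [tsum_mul_right, tsum_mul_left]
    _ = _ := by rw [Zak, ← (Equiv.addRight n).tsum_eq S]; rfl

theorem zak_of_mod_trans (α : ℝ) (hα : 0 < α) (g : ℝ × ℝ → ℝ) (k n : ℤ × ℤ) (x ω : ℝ × ℝ) :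
    Zak α (Mo ((k.1 : ℝ) / α, (k.2 : ℝ) / α)
        (Tr (α * n.1, α * n.2) fun y => ((g y : ℝ) : ℍ))) x ω
      = eqj (-(2 * π * α * n.2 * ω.2)) * eqj (2 * π * k.2 * x.2 / α) *
          Zak α (fun y => ((g y : ℝ) : ℍ)) x ω *
          eqi (2 * π * k.1 * x.1 / α) * eqi (-(2 * π * α * n.1 * ω.1)) := by
  rw [zak_of_mod hα.ne', zak_of_trans, eqj_mul_mul_eqi_swap]
  simp only [mul_assoc]
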